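/- arXiv:2309.02611 — 2 statements merged into one kernel-verified Lean document; each statement's English description precedes it below -/
import Mathlib

section
/- Let k be a field of characteristic different from 2, let A = k[x,y] be the polynomial ring in two variables, and let M' be the quotient of the free A-module A² (with generators e₁, e₂) by the submodule generated by e₁·x + e₂·x and e₁·y − e₂·y. Then e₁·(xy) = 0 in M' (and hence e₁·(xy + yx) = 0), even though the classes of e₁·x and e₁·y in M' are nonzero. -/
open MvPolynomial

/-- In the quotient `M'` of `k[x,y]²` (char `k ≠ 2`) by the submodule generated by
`e₁·x + e₂·x` and `e₁·y − e₂·y`, one has `e₁·(xy) = 0` (hence `e₁·(xy + yx) = 0`),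
while the classes of `e₁·x` and `e₁·y` are nonzero. -/
theorem stmt10 (k : Type*) [Field k] (hchar : ringChar k ≠ 2) :
    let A := MvPolynomial (Fin 2) k
    let x : A := X 0
    let y : A := X 1
    let e₁ : Fin 2 → A := Pi.single 0 1
    let e₂ : Fin 2 → A := Pi.single 1 1
    let N : Submodule A (Fin 2 → A) :=
      Submodule.span A {x • e₁ + x • e₂, y • e₁ - y • e₂}
    (Submodule.Quotient.mk ((x * y) • e₁) : (Fin 2 → A) ⧸ N) = 0 ∧
    (Submodule.Quotient.mk ((x * y + y * x) • e₁) : (Fin 2 → A) ⧸ N) = 0 ∧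
    (Submodule.Quotient.mk (x • e₁) : (Fin 2 → A) ⧸ N) ≠ 0 ∧
    (Submodule.Quotient.mk (y • e₁) : (Fin 2 → A) ⧸ N) ≠ 0 := by
  intro A x y e₁ e₂ N
  have h2 : (2 : k) ≠ 0 := Ring.two_ne_zero hchar
  have hinv : (C (2⁻¹ : k) : A) * 2 = 1 := by
    rw [show (2 : A) = C (2 : k) from (map_ofNat C 2).symm, ← C_mul,
      inv_mul_cancel₀ h2, C_1]
  -- extraction lemma: if p • e₁ maps to 0 then p = 2*a*x = 2*b*y for some a b
  have key : ∀ p : A, (Submodule.Quotient.mk (p • e₁) : (Fin 2 → A) ⧸ N) = 0 →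
      ∃ a b : A, p = 2 * (a * x) ∧ p = 2 * (b * y) := by
    intro p hp
    rw [Submodule.Quotient.mk_eq_zero, Submodule.mem_span_pair] at hp
    obtain ⟨a, b, hab⟩ := hp
    have h0 := congrFun hab 0
    have h1 := congrFun hab 1
    simp only [Pi.add_apply, Pi.sub_apply, Pi.smul_apply, smul_eq_mul, e₁, e₂,
      Pi.single_apply, show ((0:Fin 2) = 0) = True by simp,
      show ((0:Fin 2) = 1) = False by simp, show ((1:Fin 2) = 0) = False by simp,
      show ((1:Fin 2) = 1) = True by simp, if_true, if_false, mul_one, mul_zero] at h0 h1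
    exact ⟨a, b, by linear_combination -h0 - h1, by linear_combination -h0 + h1⟩
  have hmem : (Submodule.Quotient.mk ((x * y) • e₁) : (Fin 2 → A) ⧸ N) = 0 := by
    rw [Submodule.Quotient.mk_eq_zero, Submodule.mem_span_pair]
    refine ⟨C (2⁻¹ : k) * y, C (2⁻¹ : k) * x, ?_⟩
    funext i
    fin_cases i <;>
      simp only [Pi.add_apply, Pi.sub_apply, Pi.smul_apply, smul_eq_mul, e₁, e₂,
        Pi.single_apply, Fin.zero_eta, Fin.mk_one, show ((0:Fin 2) = 0) = True by simp,
        show ((0:Fin 2) = 1) = False by simp, show ((1:Fin 2) = 0) = False by simp,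
        show ((1:Fin 2) = 1) = True by simp, if_true, if_false, mul_one, mul_zero]
    · linear_combination (x * y : A) * hinv
    · ring
  refine ⟨hmem, ?_, ?_, ?_⟩
  · have : (x * y + y * x : A) = 2 * (x * y) := by ring
    rw [this]
    have h2A : ((2 : A) • ((x * y) • e₁)) = (2 * (x * y)) • e₁ := by
      rw [smul_smul]
    rw [← h2A, Submodule.Quotient.mk_smul, hmem, smul_zero]
  · intro h
    obtain ⟨a, b, _, hb⟩ := key x h
    have := congrArg (eval (fun i : Fin 2 => if i = 0 then (1:k) else 0)) hb
    simp [x, y] at this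
  · intro h
    obtain ⟨a, b, ha, _⟩ := key y h
    have := congrArg (eval (fun i : Fin 2 => if i = 0 then (0:k) else 1)) ha
    simp [x, y] at this
end

section
/- Let A^! be the quadratic dual of FK(4) over a field of characteristic ≠ 2, 3 (the quotient of the free algebra on y_{12}, y_{13}, y_{23}, y_{14}, y_{24}, y_{34} by the 19 quadratic relations). Then y_{12}² commutes with y_{13} in A^!, i.e., y_{12}² y_{13} = y_{13} y_{12}². -/
noncomputable section

open FreeAlgebra

/-- The 19 defining relations of the quadratic dual `FK(4)^!`, in the free algebra on the
generators `0 ↦ y₁₂, 1 ↦ y₁₃, 2 ↦ y₂₃, 3 ↦ y₁₄, 4 ↦ y₂₄, 5 ↦ y₃₄`. -/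
def FKdualRelSet (k : Type*) [Field k] : Set (FreeAlgebra k (Fin 6)) :=
  let y12 : FreeAlgebra k (Fin 6) := ι k 0
  let y13 : FreeAlgebra k (Fin 6) := ι k 1
  let y23 : FreeAlgebra k (Fin 6) := ι k 2
  let y14 : FreeAlgebra k (Fin 6) := ι k 3
  let y24 : FreeAlgebra k (Fin 6) := ι k 4
  let y34 : FreeAlgebra k (Fin 6) := ι k 5
  {y12*y23 + y23*y13, y13*y23 + y23*y12, y12*y23 + y13*y12, y12*y13 + y23*y12,
   y12*y24 + y24*y14, y14*y24 + y24*y12, y12*y24 + y14*y12, y12*y14 + y24*y12,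
   y13*y34 + y34*y14, y14*y34 + y34*y13, y13*y34 + y14*y13, y13*y14 + y34*y13,
   y23*y34 + y34*y24, y24*y34 + y34*y23, y23*y34 + y24*y23, y23*y24 + y34*y23,
   y12*y34 + y34*y12, y13*y24 + y24*y13, y23*y14 + y14*y23}

/-- The relation whose `RingQuot` is `FK(4)^!`. -/
def FKdualRel (k : Type*) [Field k] :
    FreeAlgebra k (Fin 6) → FreeAlgebra k (Fin 6) → Prop :=
  fun a b => a ∈ FKdualRelSet k ∧ b = 0

/-- In `FK(4)^!` over a field of characteristic `≠ 2, 3`, the element `y₁₂²` commutes with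
`y₁₃`: `y₁₂² y₁₃ = y₁₃ y₁₂²`. -/
theorem stmt14 (k : Type*) [Field k] (h2 : ringChar k ≠ 2) (h3 : ringChar k ≠ 3) :
    RingQuot.mkRingHom (FKdualRel k) (ι k 0 ^ 2 * ι k 1) =
      RingQuot.mkRingHom (FKdualRel k) (ι k 1 * ι k 0 ^ 2) := by
  set f := RingQuot.mkRingHom (FKdualRel k) with hf
  have key : ∀ x ∈ FKdualRelSet k, f x = 0 := by
    intro x hx
    have : f x = f 0 := RingQuot.mkRingHom_rel ⟨hx, rfl⟩
    simpa using this
  have h3' : f (ι k 0 * ι k 2 + ι k 1 * ι k 0) = 0 := by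
    apply key; simp [FKdualRelSet, Set.mem_insert_iff]
  have h4' : f (ι k 0 * ι k 1 + ι k 2 * ι k 0) = 0 := by
    apply key; simp [FKdualRelSet, Set.mem_insert_iff]
  have h3'' : f (ι k 0) * f (ι k 2) + f (ι k 1) * f (ι k 0) = 0 := by
    simpa only [map_add, map_mul] using h3'
  have h4'' : f (ι k 0) * f (ι k 1) + f (ι k 2) * f (ι k 0) = 0 := by
    simpa only [map_add, map_mul] using h4'
  have h : f (ι k 0 * (ι k 0 * ι k 1 + ι k 2 * ι k 0) + ι k 1 * ι k 0 ^ 2)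
      = f (ι k 0 ^ 2 * ι k 1 + (ι k 0 * ι k 2 + ι k 1 * ι k 0) * ι k 0) := by
    congr 1
    noncomm_ring
  simp only [map_add, map_mul, map_pow] at h
  rw [mul_add, add_mul, ← mul_assoc, ← mul_assoc] at h
  have h' : f (ι k 0) * (f (ι k 0) * f (ι k 1) + f (ι k 2) * f (ι k 0))
      + f (ι k 1) * f (ι k 0) ^ 2
      = f (ι k 0) ^ 2 * f (ι k 1)
      + (f (ι k 0) * f (ι k 2) + f (ι k 1) * f (ι k 0)) * f (ι k 0) := by
    rw [mul_add, add_mul, ← mul_assoc, ← mul_assoc]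
    exact h
  rw [h3'', h4'', mul_zero, zero_mul, zero_add, add_zero] at h'
  simp only [map_mul, map_pow]
  exact h'.symm

end
end
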